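/- arXiv:1310.2143 — 5 statements merged into one kernel-verified Lean document; each statement's English description precedes it below -/
import Mathlib

section
/- Let A be a parallel composition of LTSs with interface Aᵢ, and let S be any LTS over the alphabet Σᵢ. Then for every environment E (an LTS with Σ_E ∩ (Σ₁ ∪ … ∪ Σₙ) = Σ_E ∩ Σᵢ) the projections onto Σ_E of the traces of E ∥ A and of E ∥ S coincide, if and only if Tr(S) = Tr(A)|_{Σᵢ}. -/
/-!
A word is a trace of `E ∥ X` exactly when its projections onto the two alphabets are traces of
`E` and of `X`, and two words that agree on their shared letters are the projections of a common
interleaving. Hence, if `E` shares with `X` only letters of the interface `Σᵢ`, then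
`Tr(E ∥ X)|_{Σ_E}` depends on `X` only through `Tr(X)|_{Σᵢ}`; this gives one direction.
For the other, the environment that can perform every letter of `Σᵢ` at any time observes
exactly `Tr(X)|_{Σᵢ}`.
-/

structure LTS (α S : Type) where
  init : S
  step : S → α → S → Prop

inductive Exec {α S : Type} (step : S → α → S → Prop) : S → List α → S → Prop
  | nil (s : S) : Exec step s [] s
  | cons {s s' s'' : S} {a : α} {w : List α} :
      step s a s' → Exec step s' w s'' → Exec step s (a :: w) s''

def LTS.Tr {α S : Type} (L : LTS α S) (w : List α) : Prop :=
  ∃ s, Exec L.step L.init w s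

def parStep {α ι : Type} {S : ι → Type} (alph : ι → α → Bool) (A : ∀ i, LTS α (S i)) :
    (∀ i, S i) → α → (∀ i, S i) → Prop := fun s a s' =>
  ∀ i, (alph i a = true → (A i).step (s i) a (s' i)) ∧ (alph i a = false → s' i = s i)

def par {α ι : Type} {S : ι → Type} (alph : ι → α → Bool) (A : ∀ i, LTS α (S i)) :
    LTS α (∀ i, S i) :=
  ⟨fun i => (A i).init, parStep alph A⟩

/-- Binary parallel composition of two LTSs with alphabets `aA`, `aB`. -/
def par2 {α SA SB : Type} (aA aB : α → Bool) (LA : LTS α SA) (LB : LTS α SB) :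
    LTS α (SA × SB) where
  init := (LA.init, LB.init)
  step := fun s a s' =>
    (aA a = true → LA.step s.1 a s'.1) ∧ (aA a = false → s'.1 = s.1) ∧
    (aB a = true → LB.step s.2 a s'.2) ∧ (aB a = false → s'.2 = s.2)

namespace List

variable {α : Type}

theorem filter_filter_of_imp {p q : α → Bool} (h : ∀ a, p a = true → q a = true)
    (l : List α) : (l.filter q).filter p = l.filter p := by
  rw [filter_filter]
  exact filter_congr fun a _ => by cases hp : p a <;> simp [hp, h a]

theorem filter_filter_congr {p q r : α → Bool}
    (h : ∀ a, p a = true → (q a = true ↔ r a = true)) (l : List α) :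
    (l.filter q).filter p = (l.filter r).filter p := by
  rw [filter_filter, filter_filter]
  refine filter_congr fun a _ => ?_
  cases hp : p a
  · simp
  · simpa [hp] using h a hp

theorem exists_filter_eq_filter_eq {p q : α → Bool} :
    ∀ (e u : List α), (∀ a ∈ e, p a = true) → (∀ a ∈ u, q a = true) →
      e.filter q = u.filter p → ∃ w : List α, w.filter p = e ∧ w.filter q = u
  | [], u, _, hu, h => ⟨u, h.symm, filter_eq_self.2 hu⟩
  | a :: e, u, he, hu, h => by
    have ha := he a mem_cons_self
    have he' : ∀ b ∈ e, p b = true := fun b hb => he b (mem_cons_of_mem a hb)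
    cases hqa : q a
    · rw [filter_cons_of_neg (by simp [hqa])] at h
      obtain ⟨w, hwp, hwq⟩ := exists_filter_eq_filter_eq e u he' hu h
      exact ⟨a :: w, by simp [ha, hwp], by simp [hqa, hwq]⟩
    · rw [filter_cons_of_pos hqa, eq_comm, filter_eq_cons_iff] at h
      obtain ⟨u₀, u₁, rfl, hu₀, -, h⟩ := h
      obtain ⟨w, hwp, hwq⟩ := exists_filter_eq_filter_eq e u₁ he'
        (fun b hb => hu b (by simp [hb])) h.symm
      refine ⟨u₀ ++ a :: w, ?_, ?_⟩
      · simp [filter_eq_nil_iff.2 hu₀, ha, hwp]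
      · rw [filter_append, filter_eq_self.2 fun b hb => hu b (by simp [hb])]
        simp [hqa, hwq]

end List

namespace Exec

variable {α S : Type}

theorem forall_mem_of_step {step : S → α → S → Prop} {p : α → Bool}
    (hp : ∀ s a s', step s a s' → p a = true) {s s' : S} {w : List α}
    (h : Exec step s w s') : ∀ a ∈ w, p a = true := by
  induction h with
  | nil => simp
  | cons hs _ ih => exact List.forall_mem_cons.2 ⟨hp _ _ _ hs, ih⟩

theorem filter_of_stutter {step : S → α → S → Prop} {p : α → Bool}
    (hp : ∀ s a s', step s a s' → p a = false → s' = s) {s s' : S} {w : List α}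
    (h : Exec step s w s') : Exec step s (w.filter p) s' := by
  induction h with
  | nil => exact .nil _
  | @cons s t _ a _ hs _ ih =>
    cases ha : p a
    · rw [List.filter_cons_of_neg (by simp [ha])]
      exact hp s a t hs ha ▸ ih
    · rw [List.filter_cons_of_pos ha]
      exact .cons hs ih

theorem and_iff {T : Type} {R : S → α → S → Prop} {R' : T → α → T → Prop} :
    ∀ {s s' : S} {t t' : T} {w : List α},
      Exec (fun x a y => R x.1 a y.1 ∧ R' x.2 a y.2) (s, t) w (s', t') ↔
        Exec R s w s' ∧ Exec R' t w t'
  | _, _, _, _, [] => by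
    constructor
    · rintro ⟨⟩; exact ⟨.nil _, .nil _⟩
    · rintro ⟨⟨⟩, ⟨⟩⟩; exact .nil _
  | s, s', t, t', a :: w => by
    constructor
    · rintro (_ | @⟨_, ⟨_, _⟩, _, _, _, ⟨hR, hR'⟩, h⟩)
      obtain ⟨h, h'⟩ := and_iff.1 h
      exact ⟨.cons hR h, .cons hR' h'⟩
    · rintro ⟨_ | ⟨hR, h⟩, _ | ⟨hR', h'⟩⟩
      exact .cons ⟨hR, hR'⟩ (and_iff.2 ⟨h, h'⟩)

end Exec

/-- The move of one component of `par` or `par2`. -/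
def stutterStep {α S : Type} (p : α → Bool) (T : S → α → S → Prop)
    (s : S) (a : α) (s' : S) : Prop :=
  (p a = true → T s a s') ∧ (p a = false → s' = s)

theorem exec_stutterStep_iff {α S : Type} {p : α → Bool} {T : S → α → S → Prop} :
    ∀ {s s' : S} {w : List α}, Exec (stutterStep p T) s w s' ↔ Exec T s (w.filter p) s'
  | s, s', [] => by
    constructor <;> rintro ⟨⟩ <;> exact .nil _
  | s, s', a :: w => by
    cases ha : p a
    · rw [List.filter_cons_of_neg (by simp [ha]), ← exec_stutterStep_iff]
      constructor
      · rintro (_ | ⟨⟨-, hs⟩, h⟩)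
        exact hs ha ▸ h
      · exact .cons ⟨by simp [ha], fun _ => rfl⟩
    · rw [List.filter_cons_of_pos ha]
      constructor
      · rintro (_ | ⟨⟨hs, -⟩, h⟩)
        exact .cons (hs ha) (exec_stutterStep_iff.1 h)
      · rintro (_ | ⟨hs, h⟩)
        exact .cons ⟨fun _ => hs, by simp [ha]⟩ (exec_stutterStep_iff.2 h)

namespace LTS

variable {α S : Type}

theorem Tr.filter_eq_self {L : LTS α S} {p : α → Bool}
    (hp : ∀ s a s', L.step s a s' → p a = true) {w : List α} (h : L.Tr w) : w.filter p = w :=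
  let ⟨_, hw⟩ := h
  List.filter_eq_self.2 (hw.forall_mem_of_step hp)

theorem tr_par2_iff {T : Type} {aA aB : α → Bool} {LA : LTS α S} {LB : LTS α T}
    {w : List α} :
    (par2 aA aB LA LB).Tr w ↔ LA.Tr (w.filter aA) ∧ LB.Tr (w.filter aB) := by
  have hstep : (par2 aA aB LA LB).step =
      fun x a y => stutterStep aA LA.step x.1 a y.1 ∧ stutterStep aB LB.step x.2 a y.2 := by
    funext x a y
    exact propext and_assoc.symm
  change (∃ s, Exec _ (LA.init, LB.init) w s) ↔ _
  simp only [hstep, Prod.exists, Exec.and_iff, exec_stutterStep_iff]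
  exact exists_and_exists_comm.symm

theorem tr_par_filter {ι : Type} {S : ι → Type} {alph : ι → α → Bool}
    {A : ∀ i, LTS α (S i)} {p : α → Bool} (hp : ∀ j a, alph j a = true → p a = true)
    {w : List α} (h : (par alph A).Tr w) : (par alph A).Tr (w.filter p) := by
  obtain ⟨s, hw⟩ := h
  refine ⟨s, hw.filter_of_stutter fun s a s' hs ha => funext fun j => (hs j).2 ?_⟩
  cases h : alph j a
  · rfl
  · simp [hp j a h] at ha

/-- The CSP process `CHAOS` over the alphabet `p`. -/
def chaos (p : α → Bool) : LTS α Unit :=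
  ⟨(), fun _ a _ => p a = true⟩

theorem tr_chaos_filter (p : α → Bool) (w : List α) : (chaos p).Tr (w.filter p) :=
  ⟨(), by
    induction w with
    | nil => exact .nil _
    | cons a w ih =>
      cases ha : p a
      · simpa [ha] using ih
      · simpa [ha] using Exec.cons (s' := ()) ha ih⟩

/-- `Tr(L)|_p`. -/
def projTr (L : LTS α S) (p : α → Bool) : Set (List α) :=
  {w | ∃ w', L.Tr w' ∧ w'.filter p = w}

theorem projTr_eq_setOf_tr {L : LTS α S} {p : α → Bool}
    (hp : ∀ s a s', L.step s a s' → p a = true) : L.projTr p = {w | L.Tr w} := by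
  ext w
  constructor
  · rintro ⟨w, hw, rfl⟩
    rwa [hw.filter_eq_self hp]
  · exact fun hw => ⟨w, hw, hw.filter_eq_self hp⟩

theorem projTr_par2_chaos {X : Type} {c aX : α → Bool} {LX : LTS α X}
    (hc : ∀ a, c a = true → aX a = true) (hX : ∀ w, LX.Tr w → LX.Tr (w.filter aX)) :
    (par2 c aX (chaos c) LX).projTr c = LX.projTr c := by
  ext w
  constructor
  · rintro ⟨w, hw, rfl⟩
    exact ⟨_, (tr_par2_iff.1 hw).2, List.filter_filter_of_imp hc w⟩
  · rintro ⟨x, hx, rfl⟩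
    exact ⟨x, tr_par2_iff.2 ⟨tr_chaos_filter c x, hX x hx⟩, rfl⟩

theorem projTr_par2_subset {E X Y : Type} {aE aX aY c : α → Bool} {LE : LTS α E}
    {LX : LTS α X} {LY : LTS α Y} (hcY : ∀ a, c a = true → aY a = true)
    (hEX : ∀ a, aE a = true → (aX a = true ↔ c a = true))
    (hX : ∀ w, LX.Tr w → LX.Tr (w.filter aX)) (hYX : LY.projTr c ⊆ LX.projTr c) :
    (par2 aE aY LE LY).projTr aE ⊆ (par2 aE aX LE LX).projTr aE := by
  rintro _ ⟨w, hw, rfl⟩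
  obtain ⟨hwE, hwY⟩ := tr_par2_iff.1 hw
  obtain ⟨x, hx, hxw⟩ := hYX ⟨_, hwY, rfl⟩
  rw [List.filter_filter_of_imp hcY] at hxw
  have hshared : (w.filter aE).filter aX = (x.filter aX).filter aE := by
    rw [List.filter_comm, List.filter_filter_congr hEX, ← hxw, List.filter_filter_congr hEX]
  obtain ⟨v, hvE, hvX⟩ := List.exists_filter_eq_filter_eq (w.filter aE) (x.filter aX)
    (fun _ ha => (List.mem_filter.1 ha).2) (fun _ ha => (List.mem_filter.1 ha).2) hshared
  exact ⟨v, tr_par2_iff.2 ⟨hvE ▸ hwE, hvX ▸ hX x hx⟩, hvE⟩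

end LTS

theorem summary_iff_projection_general
    {α ι : Type} {S : ι → Type} (alph : ι → α → Bool) (A : ∀ i, LTS α (S i)) (i : ι)
    {SS : Type} (Sld : LTS α SS)
    (hS : ∀ s a s', Sld.step s a s' → alph i a = true)
    (aU : α → Bool) (hU : ∀ a, aU a = true ↔ ∃ j, alph j a = true) :
    (∀ (SE : Type) (aE : α → Bool) (Ev : LTS α SE),
        (∀ s a s', Ev.step s a s' → aE a = true) →
        (∀ a, aE a = true → aU a = true → alph i a = true) →
        {w | ∃ w', (par2 aE aU Ev (par alph A)).Tr w' ∧ w'.filter aE = w} =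
          {w | ∃ w', (par2 aE (alph i) Ev Sld).Tr w' ∧ w'.filter aE = w})
      ↔ {w | Sld.Tr w} = {w | ∃ w', (par alph A).Tr w' ∧ w'.filter (alph i) = w} := by
  have hiU : ∀ a, alph i a = true → aU a = true := fun a h => (hU a).2 ⟨i, h⟩
  have hAfilter : ∀ w, (par alph A).Tr w → (par alph A).Tr (w.filter aU) :=
    fun _ => LTS.tr_par_filter fun j a h => (hU a).2 ⟨j, h⟩
  have hSfilter : ∀ w, Sld.Tr w → Sld.Tr (w.filter (alph i)) :=
    fun _ h => (h.filter_eq_self hS).symm ▸ h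
  have hSproj : Sld.projTr (alph i) = {w | Sld.Tr w} := LTS.projTr_eq_setOf_tr hS
  constructor
  · intro hEnv
    have h : (par2 (alph i) aU (LTS.chaos (alph i)) (par alph A)).projTr (alph i) =
        (par2 (alph i) (alph i) (LTS.chaos (alph i)) Sld).projTr (alph i) :=
      hEnv Unit _ _ (fun _ _ _ h => h) (fun _ h _ => h)
    rw [LTS.projTr_par2_chaos hiU hAfilter, LTS.projTr_par2_chaos (fun _ h => h) hSfilter,
      hSproj] at h
    exact h.symm
  · intro hTr SE aE Ev _ hE
    rw [← hSproj] at hTr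
    exact (LTS.projTr_par2_subset hiU (fun _ _ => Iff.rfl) hSfilter hTr.ge).antisymm
      (LTS.projTr_par2_subset (fun _ h => h) (fun a ha => ⟨hE a ha, hiU a⟩) hAfilter hTr.le)

/-- for an LTS `Sld` over the interface alphabet `Σᵢ`, the
projections onto `Σ_E` of the trace languages of `E ∥ A` and `E ∥ Sld`
coincide for every environment `E` (an LTS whose alphabet meets the alphabet
`⋃ⱼ Σⱼ` of `A` only inside `Σᵢ`) if and only if `Tr(Sld) = Tr(A)|_{Σᵢ}`. -/
theorem summary_iff_projection
    {α ι : Type} {S : ι → Type} (alph : ι → α → Bool) (A : ∀ i, LTS α (S i)) (i : ι)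
    (hA : ∀ j s a s', (A j).step s a s' → alph j a = true)
    {SS : Type} (Sld : LTS α SS)
    (hS : ∀ s a s', Sld.step s a s' → alph i a = true)
    (aU : α → Bool) (hU : ∀ a, aU a = true ↔ ∃ j, alph j a = true) :
    (∀ (SE : Type) (aE : α → Bool) (Ev : LTS α SE),
        (∀ s a s', Ev.step s a s' → aE a = true) →
        (∀ a, aE a = true → aU a = true → alph i a = true) →
        {w | ∃ w', (par2 aE aU Ev (par alph A)).Tr w' ∧ w'.filter aE = w} =
          {w | ∃ w', (par2 aE (alph i) Ev Sld).Tr w' ∧ w'.filter aE = w})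
      ↔ {w | Sld.Tr w} = {w | ∃ w', (par alph A).Tr w' ∧ w'.filter (alph i) = w} :=
  summary_iff_projection_general alph A i Sld hS aU hU
end

section
/- Let e' ≪ e be events of a branching process (e' a strong cause of e), and let ê be an event concurrent with both e' and e. Then the set difference of pasts ([e] \ [e']) is disjoint from the past [ê]. -/
open Sum

/-- Nodes `x` and `y` of an occurrence net are in conflict if some condition
can reach both along paths exiting it by different arcs (arcs out of a
condition lead to events). -/
def bpConflict {C E : Type} (F : C ⊕ E → C ⊕ E → Prop) (x y : C ⊕ E) : Prop :=
  ∃ (c : C) (e₁ e₂ : E), e₁ ≠ e₂ ∧ F (inl c) (inr e₁) ∧ F (inl c) (inr e₂) ∧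
    Relation.ReflTransGen F (inr e₁) x ∧ Relation.ReflTransGen F (inr e₂) y

/-- Nodes are concurrent if they are neither causally related nor in conflict. -/
def bpConcurrent {C E : Type} (F : C ⊕ E → C ⊕ E → Prop) (x y : C ⊕ E) : Prop :=
  ¬ Relation.ReflTransGen F x y ∧ ¬ Relation.ReflTransGen F y x ∧ ¬ bpConflict F x y

/-- The past `[e]` of an event: all events `e' ≤ e`. -/
def bpPast {C E : Type} (F : C ⊕ E → C ⊕ E → Prop) (e : E) : Set E :=
  {e' | Relation.ReflTransGen F (inr e') (inr e)}

/-- A condition is initial if it has no input event. -/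
def bpInitial {C E : Type} (F : C ⊕ E → C ⊕ E → Prop) (c : C) : Prop :=
  ¬ ∃ e : E, F (inr e) (inl c)

/-- The cut `M(e)`: conditions produced by (or initial and untouched by) the
past of `e` and not consumed by it. -/
def bpCut {C E : Type} (F : C ⊕ E → C ⊕ E → Prop) (e : E) : Set C :=
  {c | (bpInitial F c ∨ ∃ e' ∈ bpPast F e, F (inr e') (inl c)) ∧
       ∀ e'' ∈ bpPast F e, ¬ F (inl c) (inr e'')}

/-- `e'` is a strong cause of `e` (`e' ≪ e`): `e' < e` and `b' < b` for every
`b ∈ M(e) \ M(e')` and `b' ∈ M(e') \ M(e)`. -/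
def bpSCause {C E : Type} (F : C ⊕ E → C ⊕ E → Prop) (e' e : E) : Prop :=
  Relation.TransGen F (inr e') (inr e) ∧
  ∀ b ∈ bpCut F e, b ∉ bpCut F e' → ∀ b' ∈ bpCut F e', b' ∉ bpCut F e →
    Relation.TransGen F (inl b') (inl b)

/-- A branching process of a parallel composition of LTSs indexed by `ι`:
an occurrence net whose conditions are labelled with components (`comp`),
with one condition per component in the initial cut, and where every event
consumes and produces exactly one condition per participating component. -/
structure BProc (ι C E : Type) where
  F : C ⊕ E → C ⊕ E → Prop
  comp : C → ι
  flow_cc : ∀ c c' : C, ¬ F (inl c) (inl c')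
  flow_ee : ∀ e e' : E, ¬ F (inr e) (inr e')
  cond_pre_unique : ∀ (c : C) (e e' : E), F (inr e) (inl c) → F (inr e') (inl c) → e = e'
  acyclic : ∀ x : C ⊕ E, ¬ Relation.TransGen F x x
  past_finite : ∀ e : E, (bpPast F e).Finite
  pre_nonempty : ∀ e : E, ∃ c : C, F (inl c) (inr e)
  no_self_conflict : ∀ e : E, ¬ bpConflict F (inr e) (inr e)
  pre_comp_inj : ∀ (e : E) (c c' : C),
    F (inl c) (inr e) → F (inl c') (inr e) → comp c = comp c' → c = c'
  post_comp_inj : ∀ (e : E) (c c' : C),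
    F (inr e) (inl c) → F (inr e) (inl c') → comp c = comp c' → c = c'
  pre_post_comp : ∀ (e : E) (c : C),
    F (inl c) (inr e) → ∃ c', F (inr e) (inl c') ∧ comp c' = comp c
  post_pre_comp : ∀ (e : E) (c : C),
    F (inr e) (inl c) → ∃ c', F (inl c') (inr e) ∧ comp c' = comp c
  init_unique : ∀ c c' : C, bpInitial F c → bpInitial F c' → comp c = comp c' → c = c'
  init_exists : ∀ i : ι, ∃ c : C, comp c = i ∧ bpInitial F c

/-!
Take `f` causally maximal in `([e] \ [e']) ∩ [ê]`. Since `ê` is not below `e`, some output condition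
`d` of `f` is consumed by an event `q ≤ ê` lying outside `[e]`. No event of `[e]` consumes `d`
(that event and `q` would put `e` and `ê` in conflict), so `d ∈ M(e)`, while `d ∉ M(e')` because its
only producer `f` is not in `[e']`. Strong causality then gives `e' < d < q ≤ ê`, contradicting the
concurrency of `e'` and `ê`.
-/

namespace BProc

open Relation

variable {ι C E : Type} (N : BProc ι C E)

theorem exists_post_pre_of_transGen {a b : E} (hab : TransGen N.F (inr a) (inr b)) :
    ∃ (c : C) (q : E), N.F (inr a) (inl c) ∧ N.F (inl c) (inr q) ∧
      ReflTransGen N.F (inr q) (inr b) := by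
  obtain ⟨z, haz, hzb⟩ := TransGen.head'_iff.mp hab
  rcases z with c | g
  · obtain ⟨w, hcw, hwb⟩ := hzb.cases_head.resolve_left (by simp)
    rcases w with c₂ | q
    · exact absurd hcw (N.flow_cc c c₂)
    · exact ⟨c, q, haz, hcw, hwb⟩
  · exact absurd haz (N.flow_ee a g)

theorem bpPast_ncard_lt {a b : E} (hab : TransGen N.F (inr a) (inr b)) :
    (bpPast N.F a).ncard < (bpPast N.F b).ncard := by
  refine Set.ncard_lt_ncard ⟨fun s hs => hs.trans hab.to_reflTransGen, fun hsub => ?_⟩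
    (N.past_finite b)
  exact N.acyclic (inr a) (hab.trans_left (hsub ReflTransGen.refl))

theorem exists_causally_maximal {S : Set E} (hfin : S.Finite) (hne : S.Nonempty) :
    ∃ f ∈ S, ∀ q ∈ S, ¬ TransGen N.F (inr f) (inr q) := by
  obtain ⟨f, hfS, hmax⟩ := hfin.exists_maximalFor (fun s => (bpPast N.F s).ncard) S hne
  refine ⟨f, hfS, fun q hqS hfq => ?_⟩
  have hlt := N.bpPast_ncard_lt hfq
  exact hlt.not_ge (hmax hqS hlt.le)

theorem post_mem_bpCut {e : E} {c : C} (hec : N.F (inr e) (inl c)) : c ∈ bpCut N.F e :=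
  ⟨Or.inr ⟨e, ReflTransGen.refl, hec⟩, fun _ hs hcs =>
    N.acyclic (inr e) (((TransGen.single hec).tail hcs).trans_left hs)⟩

theorem post_notMem_bpCut {f e : E} {d : C} (hfd : N.F (inr f) (inl d))
    (hf : f ∉ bpPast N.F e) : d ∉ bpCut N.F e := by
  rintro ⟨hinit | ⟨p, hp, hpd⟩, -⟩
  · exact hinit ⟨f, hfd⟩
  · exact hf (N.cond_pre_unique d p f hpd hfd ▸ hp)

theorem transGen_of_bpSCause {e' e : E} {d : C} (h : bpSCause N.F e' e)
    (hde : d ∈ bpCut N.F e) (hde' : d ∉ bpCut N.F e') : TransGen N.F (inr e') (inl d) := by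
  obtain ⟨c, r, he'c, hcr, hre⟩ := N.exists_post_pre_of_transGen h.1
  have hce : c ∉ bpCut N.F e := fun hc => hc.2 r hre hcr
  exact TransGen.head he'c (h.2 d hde hde' c (N.post_mem_bpCut he'c) hce)

end BProc

open Relation in
/-- Lemma 2: if `e' ≪ e` and `ê` is concurrent with both `e'`
and `e`, then `([e] \ [e']) ∩ [ê] = ∅`. -/
theorem strong_cause_concurrent_disjoint
    {ι C E : Type} (N : BProc ι C E) (e' e ehat : E)
    (h : bpSCause N.F e' e)
    (h1 : bpConcurrent N.F (inr ehat) (inr e'))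
    (h2 : bpConcurrent N.F (inr ehat) (inr e)) :
    (bpPast N.F e \ bpPast N.F e') ∩ bpPast N.F ehat = ∅ := by
  by_contra hne
  obtain ⟨f, ⟨⟨hfe, hfe'⟩, hfhat⟩, hmax⟩ := N.exists_causally_maximal
    ((N.past_finite e).subset fun x hx => hx.1.1) (Set.nonempty_iff_ne_empty.2 hne)
  have hf_lt_hat : TransGen N.F (inr f) (inr ehat) :=
    (reflTransGen_iff_eq_or_transGen.mp hfhat).resolve_left fun hf => h2.1 (hf ▸ hfe)
  obtain ⟨d, q, hfd, hdq, hqhat⟩ := N.exists_post_pre_of_transGen hf_lt_hat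
  have hfq : TransGen N.F (inr f) (inr q) := (TransGen.single hfd).tail hdq
  have hqe : q ∉ bpPast N.F e := fun hq =>
    hmax q ⟨⟨hq, fun hq' => hfe' (hfq.to_reflTransGen.trans hq')⟩, hqhat⟩ hfq
  have hde : d ∈ bpCut N.F e := ⟨Or.inr ⟨f, hfe, hfd⟩, fun r hr hdr =>
    h2.2.2 ⟨d, q, r, fun hqr => hqe (hqr ▸ hr), hdq, hdr, hqhat, hr⟩⟩
  have he'd := N.transGen_of_bpSCause h hde (N.post_notMem_bpCut hfd hfe')
  exact h1.2.1 ((he'd.tail hdq).to_reflTransGen.trans hqhat)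
end

section
/- In a branching process of A₁ ∥ … ∥ Aₙ, for every event e and every component index j, the cut M(e) reached by firing the past of e contains exactly one condition labelled by a state of A_j. -/
open Sum

namespace CutProofAux

variable {ι C E : Type}

/-- One "token move" inside a fixed component: a past event consumes `d`
and produces `d'` of the same component. -/
def Step (N : BProc ι C E) (e : E) (d d' : C) : Prop :=
  ∃ g ∈ bpPast N.F e, N.F (inl d) (inr g) ∧ N.F (inr g) (inl d') ∧
    N.comp d' = N.comp d

lemma step_det (N : BProc ι C E) (e : E) {d d₁ d₂ : C}
    (h1 : Step N e d d₁) (h2 : Step N e d d₂) : d₁ = d₂ := by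
  obtain ⟨g₁, hg₁, hdg₁, hgd₁, hc₁⟩ := h1
  obtain ⟨g₂, hg₂, hdg₂, hgd₂, hc₂⟩ := h2
  have hg : g₁ = g₂ := by
    by_contra hne
    exact N.no_self_conflict e ⟨d, g₁, g₂, hne, hdg₁, hdg₂, hg₁, hg₂⟩
  subst hg
  exact N.post_comp_inj g₁ d₁ d₂ hgd₁ hgd₂ (hc₁.trans hc₂.symm)

lemma walk_comp (N : BProc ι C E) (e : E) {d c : C}
    (h : Relation.ReflTransGen (Step N e) d c) : N.comp c = N.comp d := by
  induction h with
  | refl => rfl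
  | tail _ hstep ih => exact hstep.choose_spec.2.2.2.trans ih

lemma walk_origin (N : BProc ι C E) (e : E) {d c : C}
    (h : Relation.ReflTransGen (Step N e) d c)
    (hO : bpInitial N.F d ∨ ∃ f ∈ bpPast N.F e, N.F (inr f) (inl d)) :
    bpInitial N.F c ∨ ∃ f ∈ bpPast N.F e, N.F (inr f) (inl c) := by
  induction h with
  | refl => exact hO
  | tail _ hstep _ =>
      obtain ⟨g, hg, _, hgd, _⟩ := hstep
      exact Or.inr ⟨g, hg, hgd⟩

lemma walk_unique (N : BProc ι C E) (e : E) {c c₁ c₂ : C}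
    (h1 : Relation.ReflTransGen (Step N e) c c₁)
    (h2 : Relation.ReflTransGen (Step N e) c c₂)
    (n1 : ∀ d, ¬ Step N e c₁ d) (n2 : ∀ d, ¬ Step N e c₂ d) : c₁ = c₂ := by
  induction h1 using Relation.ReflTransGen.head_induction_on generalizing c₂ with
  | refl =>
      rcases h2.cases_head with h | ⟨b, hb, _⟩
      · exact h
      · exact absurd hb (n1 b)
  | head hstep _ ih =>
      rcases h2.cases_head with h | ⟨b, hb, htail⟩
      · subst h; exact absurd hstep (n2 _)
      · have := step_det N e hstep hb
        subst this
        exact ih htail n2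

/-- From any condition one can walk forward to a condition not consumed
by the past of `e`. -/
lemma walk_to_cut (N : BProc ι C E) (e : E) :
    ∀ n (d : C),
      ({g ∈ bpPast N.F e | ¬ Relation.TransGen N.F (inr g) (inl d)}).ncard ≤ n →
      ∃ c, Relation.ReflTransGen (Step N e) d c ∧
        ∀ g ∈ bpPast N.F e, ¬ N.F (inl c) (inr g) := by
  intro n
  induction n with
  | zero =>
      intro d hcard
      refine ⟨d, Relation.ReflTransGen.refl, ?_⟩
      intro g hg hF
      have hfin : ({g ∈ bpPast N.F e | ¬ Relation.TransGen N.F (inr g) (inl d)}).Finite :=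
        (N.past_finite e).subset (fun x hx => hx.1)
      have hempty : ({g ∈ bpPast N.F e | ¬ Relation.TransGen N.F (inr g) (inl d)}) = ∅ :=
        (Set.ncard_eq_zero hfin).mp (Nat.le_zero.mp hcard)
      have hgmem : g ∈ ({g ∈ bpPast N.F e | ¬ Relation.TransGen N.F (inr g) (inl d)}) := by
        refine ⟨hg, fun habs => ?_⟩
        exact N.acyclic (inr g) (habs.trans (Relation.TransGen.single hF))
      rw [hempty] at hgmem
      exact hgmem
  | succ n ih =>
      intro d hcard
      by_cases hcons : ∃ g ∈ bpPast N.F e, N.F (inl d) (inr g)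
      · obtain ⟨g, hg, hdg⟩ := hcons
        obtain ⟨c', hgc', hcomp⟩ := N.pre_post_comp g d hdg
        have hstep : Step N e d c' := ⟨g, hg, hdg, hgc', hcomp⟩
        have hsub : ({g' ∈ bpPast N.F e | ¬ Relation.TransGen N.F (inr g') (inl c')}) ⊂
            ({g' ∈ bpPast N.F e | ¬ Relation.TransGen N.F (inr g') (inl d)}) := by
          constructor
          · rintro x ⟨hx, hnx⟩
            refine ⟨hx, fun habs => hnx ?_⟩
            exact (habs.trans (Relation.TransGen.single hdg)).trans
              (Relation.TransGen.single hgc')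
          · intro hsup
            have hgmem : g ∈ ({g' ∈ bpPast N.F e | ¬ Relation.TransGen N.F (inr g') (inl d)}) := by
              refine ⟨hg, fun habs => ?_⟩
              exact N.acyclic (inr g) (habs.trans (Relation.TransGen.single hdg))
            have := (hsup hgmem).2
            exact this (Relation.TransGen.single hgc')
        have hfin : ({g' ∈ bpPast N.F e | ¬ Relation.TransGen N.F (inr g') (inl d)}).Finite :=
          (N.past_finite e).subset (fun x hx => hx.1)
        have hlt := Set.ncard_lt_ncard hsub hfin
        obtain ⟨c, hwalk, hnf⟩ := ih c' (by omega)
        exact ⟨c, Relation.ReflTransGen.head hstep hwalk, hnf⟩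
      · exact ⟨d, Relation.ReflTransGen.refl, fun g hg hF => hcons ⟨g, hg, hF⟩⟩

/-- Every condition that is initial or produced by the past of `e` is
reachable by a token walk from an initial condition of its component. -/
lemma from_initial (N : BProc ι C E) (e : E) :
    ∀ n (c : C),
      ({g ∈ bpPast N.F e | Relation.TransGen N.F (inr g) (inl c)}).ncard ≤ n →
      (bpInitial N.F c ∨ ∃ f ∈ bpPast N.F e, N.F (inr f) (inl c)) →
      ∃ c₀, bpInitial N.F c₀ ∧ N.comp c₀ = N.comp c ∧
        Relation.ReflTransGen (Step N e) c₀ c := by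
  intro n
  induction n with
  | zero =>
      intro c hcard hO
      rcases hO with hinit | ⟨f, hf, hfc⟩
      · exact ⟨c, hinit, rfl, Relation.ReflTransGen.refl⟩
      · exfalso
        have hfin : ({g ∈ bpPast N.F e | Relation.TransGen N.F (inr g) (inl c)}).Finite :=
          (N.past_finite e).subset (fun x hx => hx.1)
        have hempty := (Set.ncard_eq_zero hfin).mp (Nat.le_zero.mp hcard)
        have : f ∈ ({g ∈ bpPast N.F e | Relation.TransGen N.F (inr g) (inl c)}) :=
          ⟨hf, Relation.TransGen.single hfc⟩
        rw [hempty] at this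
        exact this
  | succ n ih =>
      intro c hcard hO
      rcases hO with hinit | ⟨f, hf, hfc⟩
      · exact ⟨c, hinit, rfl, Relation.ReflTransGen.refl⟩
      · obtain ⟨d, hdf, hcomp⟩ := N.post_pre_comp f c hfc
        have hOd : bpInitial N.F d ∨ ∃ f' ∈ bpPast N.F e, N.F (inr f') (inl d) := by
          by_cases hprod : ∃ f', N.F (inr f') (inl d)
          · obtain ⟨f', hf'⟩ := hprod
            refine Or.inr ⟨f', ?_, hf'⟩
            have : Relation.TransGen N.F (inr f') (inr f) :=
              (Relation.TransGen.single hf').tail hdf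
            exact this.to_reflTransGen.trans hf
          · exact Or.inl hprod
        have hsub : ({g ∈ bpPast N.F e | Relation.TransGen N.F (inr g) (inl d)}) ⊂
            ({g ∈ bpPast N.F e | Relation.TransGen N.F (inr g) (inl c)}) := by
          constructor
          · rintro x ⟨hx, hxd⟩
            exact ⟨hx, (hxd.trans (Relation.TransGen.single hdf)).trans
              (Relation.TransGen.single hfc)⟩
          · intro hsup
            have hfmem : f ∈ ({g ∈ bpPast N.F e | Relation.TransGen N.F (inr g) (inl c)}) :=
              ⟨hf, Relation.TransGen.single hfc⟩
            have := (hsup hfmem).2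
            exact N.acyclic (inr f) (this.tail hdf)
        have hfin : ({g ∈ bpPast N.F e | Relation.TransGen N.F (inr g) (inl c)}).Finite :=
          (N.past_finite e).subset (fun x hx => hx.1)
        have hlt := Set.ncard_lt_ncard hsub hfin
        obtain ⟨c₀, hc₀init, hc₀comp, hwalk⟩ := ih d (by omega) hOd
        exact ⟨c₀, hc₀init, hc₀comp.trans hcomp,
          hwalk.tail ⟨f, hf, hdf, hfc, hcomp.symm⟩⟩

lemma cut_no_step (N : BProc ι C E) (e : E) {c : C} (hc : c ∈ bpCut N.F e) :
    ∀ d, ¬ Step N e c d := by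
  rintro d ⟨g, hg, hcg, _, _⟩
  exact hc.2 g hg hcg

end CutProofAux

/-- in a branching process of `A₁ ∥ ⋯ ∥ Aₙ`, for every event `e`
and component `j`, the cut `M(e)` contains exactly one condition of
component `j`. -/
theorem cut_unique_condition_per_component
    {ι C E : Type} (N : BProc ι C E) (e : E) (j : ι) :
    ∃! c : C, c ∈ bpCut N.F e ∧ N.comp c = j := by
  classical
  open CutProofAux in
  obtain ⟨c₀, hc₀comp, hc₀init⟩ := N.init_exists j
  obtain ⟨c, hwalk, hnocons⟩ := CutProofAux.walk_to_cut N e _ c₀ le_rfl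
  have hOc : bpInitial N.F c ∨ ∃ f ∈ bpPast N.F e, N.F (inr f) (inl c) :=
    CutProofAux.walk_origin N e hwalk (Or.inl hc₀init)
  have hccut : c ∈ bpCut N.F e := ⟨hOc, hnocons⟩
  have hccomp : N.comp c = j := (CutProofAux.walk_comp N e hwalk).trans hc₀comp
  refine ⟨c, ⟨hccut, hccomp⟩, ?_⟩
  rintro c' ⟨hc'cut, hc'comp⟩
  obtain ⟨d₀, hd₀init, hd₀comp, hwalk'⟩ :=
    CutProofAux.from_initial N e _ c' le_rfl hc'cut.1
  have hd₀ : d₀ = c₀ :=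
    N.init_unique d₀ c₀ hd₀init hc₀init (by rw [hd₀comp, hc'comp, hc₀comp])
  subst hd₀
  exact CutProofAux.walk_unique N e hwalk' hwalk
    (CutProofAux.cut_no_step N e hc'cut) (CutProofAux.cut_no_step N e hccut)
end

section
/- If an infinite word w over Σ₁ ∪ … ∪ Σₙ is such that for every i the projection w|_{Σᵢ} is a trace (finite or infinite) of the finite LTS Aᵢ, then w is a trace of the parallel composition A₁ ∥ … ∥ Aₙ. -/
/-!
Component `i` only moves on the letters of `Σᵢ`, so after reading the prefix `w₀ ⋯ wₖ₋₁` it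
must be in the state its own run reaches after `count (· ∈ Σᵢ) k` steps. Reading off, for every
component, a run of the projection `w|Σᵢ` along this counter gives the composite run; the letters
`wₖ ∈ Σᵢ` are the ones where the counter of `i` advances, and there `nth ∘ count = id`.
-/

theorem Exec.exists_states {α S : Type} {step : S → α → S → Prop} {s t : S} {l : List α}
    (h : Exec step s l t) :
    ∃ f : ℕ → S, f 0 = s ∧ ∀ m (hm : m < l.length), step (f m) l[m] (f (m + 1)) := by
  induction h with
  | nil s => exact ⟨fun _ => s, rfl, fun m hm => by simp at hm⟩
  | @cons s _ _ _ _ hs _ ih =>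
    obtain ⟨f, hf0, hf⟩ := ih
    refine ⟨fun m => Nat.casesOn m s f, rfl, fun m hm => ?_⟩
    cases m with
    | zero => simpa [hf0] using hs
    | succ m => exact hf m (by simpa using hm)

section ProjRun

variable {α S : Type} {step : S → α → S → Prop} {s₀ : S} {w : ℕ → α}
  {p : ℕ → Prop} [DecidablePred p]

/-- `σ` is a run from `s₀` of the projection of `w` onto the positions satisfying `p`, indexed so
that `σ (count p k)` is the state reached after reading the prefix `w₀ ⋯ wₖ₋₁`. -/
def IsProjRun (step : S → α → S → Prop) (s₀ : S) (w : ℕ → α) (p : ℕ → Prop) [DecidablePred p]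
    (σ : ℕ → S) : Prop :=
  σ 0 = s₀ ∧ ∀ k, p k → step (σ (Nat.count p k)) (w k) (σ (Nat.count p k + 1))

theorem exists_isProjRun_of_exec (hfin : {k | p k}.Finite) {t : S}
    (h : Exec step s₀ (((List.range hfin.toFinset.card).map (Nat.nth p)).map w) t) :
    ∃ σ, IsProjRun step s₀ w p σ := by
  obtain ⟨σ, hσ0, hσ⟩ := h.exists_states
  refine ⟨σ, hσ0, fun k hk => ?_⟩
  have hstep := hσ (Nat.count p k) (by simpa using Nat.count_lt_card hfin hk)
  simpa [Nat.nth_count hk] using hstep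

theorem isProjRun_of_forall_step_nth {σ : ℕ → S} (hσ0 : σ 0 = s₀)
    (hσ : ∀ m, step (σ m) (w (Nat.nth p m)) (σ (m + 1))) :
    IsProjRun step s₀ w p σ :=
  ⟨hσ0, fun k hk => by simpa [Nat.nth_count hk] using hσ (Nat.count p k)⟩

end ProjRun

theorem parStep_of_isProjRun {α ι : Type} {S : ι → Type} {alph : ι → α → Bool}
    {A : ∀ i, LTS α (S i)} {w : ℕ → α} {σ : ∀ i, ℕ → S i}
    (hσ : ∀ i, IsProjRun (A i).step (A i).init w (fun k => alph i (w k) = true) (σ i)) (k : ℕ) :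
    parStep alph A (fun i => σ i (Nat.count (fun n => alph i (w n) = true) k)) (w k)
      (fun i => σ i (Nat.count (fun n => alph i (w n) = true) (k + 1))) := by
  intro i
  have hcount := Nat.count_succ (p := fun n => alph i (w n) = true) k
  refine ⟨fun h => ?_, fun h => ?_⟩
  · simp only [h, if_true] at hcount
    simpa only [hcount] using (hσ i).2 k h
  · simp only [h, Bool.false_eq_true, if_false, add_zero] at hcount
    simp only [hcount]

theorem infinite_word_trace_of_projections_general
    {α ι : Type} {S : ι → Type}
    (alph : ι → α → Bool) (A : ∀ i, LTS α (S i))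
    (w : ℕ → α)
    (hproj : ∀ i,
      (∀ hfin : {k | alph i (w k) = true}.Finite,
        (A i).Tr (((List.range hfin.toFinset.card).map
          (Nat.nth fun k => alph i (w k) = true)).map w)) ∧
      ({k | alph i (w k) = true}.Infinite →
        ∃ τ : ℕ → S i, τ 0 = (A i).init ∧
          ∀ k, (A i).step (τ k) (w (Nat.nth (fun n => alph i (w n) = true) k)) (τ (k + 1)))) :
    ∃ ρ : ℕ → ∀ i, S i, ρ 0 = (fun i => (A i).init) ∧
      ∀ k, parStep alph A (ρ k) (w k) (ρ (k + 1)) := by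
  have hrun : ∀ i, ∃ σ, IsProjRun (A i).step (A i).init w (fun k => alph i (w k) = true) σ := by
    intro i
    by_cases hfin : {k | alph i (w k) = true}.Finite
    · obtain ⟨_, hexec⟩ := (hproj i).1 hfin
      exact exists_isProjRun_of_exec hfin hexec
    · obtain ⟨τ, hτ0, hτ⟩ := (hproj i).2 hfin
      exact ⟨τ, isProjRun_of_forall_step_nth hτ0 hτ⟩
  choose σ hσ using hrun
  refine ⟨fun k i => σ i (Nat.count (fun n => alph i (w n) = true) k), ?_, parStep_of_isProjRun hσ⟩
  funext i
  simpa using (hσ i).1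

/-- if an infinite word `w` over `Σ₁ ∪ ⋯ ∪ Σₙ` is such that for
every component `i` its projection onto `Σᵢ` (which may be finite or infinite)
is a trace of the finite LTS `Aᵢ`, then `w` is an infinite trace of the
parallel composition `A₁ ∥ ⋯ ∥ Aₙ`. -/
theorem infinite_word_trace_of_projections
    {α ι : Type} [Finite ι] {S : ι → Type} [∀ i, Finite (S i)]
    (alph : ι → α → Bool) (A : ∀ i, LTS α (S i))
    (hA : ∀ i s a s', (A i).step s a s' → alph i a = true)
    (w : ℕ → α) (hw : ∀ k, ∃ i, alph i (w k) = true)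
    (hproj : ∀ i,
      (∀ hfin : {k | alph i (w k) = true}.Finite,
        (A i).Tr (((List.range hfin.toFinset.card).map
          (Nat.nth fun k => alph i (w k) = true)).map w)) ∧
      ({k | alph i (w k) = true}.Infinite →
        ∃ τ : ℕ → S i, τ 0 = (A i).init ∧
          ∀ k, (A i).step (τ k) (w (Nat.nth (fun n => alph i (w n) = true) k)) (τ (k + 1)))) :
    ∃ ρ : ℕ → ∀ i, S i, ρ 0 = (fun i => (A i).init) ∧
      ∀ k, parStep alph A (ρ k) (w k) (ρ (k + 1)) :=
  infinite_word_trace_of_projections_general alph A w hproj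
end

section
/- Let L be an LTS and ≡ an equivalence on its states such that whenever s ≡ s' the traces executable from s equal the traces executable from s'. Then the folding of L by ≡ has exactly the same trace language as L. -/
/-- The folding of an LTS by an equivalence on its states: states are the
equivalence classes, and every `a`-transition `(s, s')` induces an
`a`-transition `([s], [s'])`. -/
def fold {α S : Type} (L : LTS α S) (r : Setoid S) : LTS α (Quotient r) where
  init := Quotient.mk r L.init
  step := fun q a q' => ∃ s s', Quotient.mk r s = q ∧ Quotient.mk r s' = q' ∧ L.step s a s'


/-- Traces executable from a given state. -/
def TrFrom {α S : Type} (L : LTS α S) (s : S) (w : List α) : Prop :=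
  ∃ s', Exec L.step s w s'

lemma lift_exec {α S : Type} (L : LTS α S) (r : Setoid S) {s s' : S} {w : List α}
    (e : Exec L.step s w s') :
    Exec (fold L r).step (Quotient.mk r s) w (Quotient.mk r s') := by
  induction e with
  | nil s => exact Exec.nil _
  | cons hst _ ih => exact Exec.cons ⟨_, _, rfl, rfl, hst⟩ ih

lemma unfold_exec {α S : Type} (L : LTS α S) (r : Setoid S)
    (h : ∀ s s', r.r s s' → ∀ w, TrFrom L s w ↔ TrFrom L s' w)
    {q q' : Quotient r} {w : List α} (e : Exec (fold L r).step q w q') :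
    ∀ s, Quotient.mk r s = q → TrFrom L s w := by
  induction e with
  | nil q => exact fun s _ => ⟨s, Exec.nil s⟩
  | cons hst _ ih =>
    rintro s rfl
    obtain ⟨t, t', ht, rfl, hstep⟩ := hst
    obtain ⟨u, hu⟩ := ih t' rfl
    have : TrFrom L t _ := ⟨u, Exec.cons hstep hu⟩
    exact (h t s (Quotient.exact ht) _).mp this

/-- if the equivalence `r` refines trace equivalence of states
(equivalent states have the same executable traces), then the folding of `L`
by `r` has exactly the same trace language as `L`. -/
theorem fold_traces_eq {α S : Type} (L : LTS α S) (r : Setoid S)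
    (h : ∀ s s', r.r s s' → ∀ w, TrFrom L s w ↔ TrFrom L s' w) :
    ∀ w, (fold L r).Tr w ↔ L.Tr w := by
  intro w
  constructor
  · rintro ⟨q, e⟩
    exact unfold_exec L r h e L.init rfl
  · rintro ⟨s, e⟩
    exact ⟨_, lift_exec L r e⟩
end
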